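/- arXiv:1908.01859 — 5 statements merged into one kernel-verified Lean document; each statement's English description precedes it below -/
import Mathlib

section
/- For integer n ≥ 2, the function b(p) = (1 - n·p)·p/(1 - p) on [0, 1/n] attains its maximum at p̂ = 1 - √(n·(n-1))/n, and the maximum value equals (2n - 1) - 2·√(n·(n-1)). -/
/-!
Write `b(p) = (1 - a p) p / (1 - p)` and let `s² = a (a - 1)`. Completing the square gives
`(2a - 1 - 2s) - b(p) = (a p - (a - s))² / (a (1 - p))`, which is nonnegative for `p < 1` and
vanishes at `p = 1 - s / a`. With `a = n`, `s = √(n (n - 1))` this yields both the maximiser and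
the maximum, on all of `p < 1` and hence on `[0, 1/n]`.
-/

open Set

noncomputable def interceptProb (a p : ℝ) : ℝ := (1 - a * p) * p / (1 - p)

theorem sub_interceptProb_eq_sq_div {a s p : ℝ} (ha : a ≠ 0) (hs : s ^ 2 = a * (a - 1))
    (hp : p ≠ 1) :
    (2 * a - 1 - 2 * s) - interceptProb a p = (a * p - (a - s)) ^ 2 / (a * (1 - p)) := by
  have hp' : 1 - p ≠ 0 := sub_ne_zero.mpr hp.symm
  rw [interceptProb]
  field_simp
  linear_combination -hs

theorem interceptProb_one_sub_div {a s : ℝ} (ha : a ≠ 0) (hs : s ^ 2 = a * (a - 1))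
    (hs₀ : s ≠ 0) : interceptProb a (1 - s / a) = 2 * a - 1 - 2 * s := by
  have hp : 1 - s / a ≠ 1 := by simpa [sub_eq_self] using div_ne_zero hs₀ ha
  have h := sub_interceptProb_eq_sq_div ha hs hp
  rw [mul_sub, mul_div_cancel₀ s ha, mul_one, sub_self, zero_pow two_ne_zero, zero_div,
    sub_eq_zero] at h
  exact h.symm

theorem isMaxOn_interceptProb {a s : ℝ} (ha : 0 < a) (hs : s ^ 2 = a * (a - 1)) (hs₀ : s ≠ 0) :
    IsMaxOn (interceptProb a) (Iio 1) (1 - s / a) := by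
  intro p (hp : p < 1)
  have hgap := sub_interceptProb_eq_sq_div ha.ne' hs hp.ne
  have hgap_nonneg : 0 ≤ (a * p - (a - s)) ^ 2 / (a * (1 - p)) := by
    have : 0 < 1 - p := sub_pos.mpr hp
    positivity
  show interceptProb a p ≤ interceptProb a (1 - s / a)
  rw [interceptProb_one_sub_div ha.ne' hs hs₀]
  linarith

theorem stmt_2 (n : ℕ) (hn : 2 ≤ n) :
    IsMaxOn (fun p : ℝ => (1 - n * p) * p / (1 - p)) (Set.Icc 0 (1 / n))
      (1 - Real.sqrt (n * (n - 1)) / n) ∧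
    (1 - n * (1 - Real.sqrt (n * (n - 1)) / n)) * (1 - Real.sqrt (n * (n - 1)) / n) /
        (1 - (1 - Real.sqrt (n * (n - 1)) / n)) =
      (2 * n - 1) - 2 * Real.sqrt (n * (n - 1)) := by
  have hn' : (2 : ℝ) ≤ n := by exact_mod_cast hn
  have hpos : (0 : ℝ) < n := by linarith
  have hprod : (0 : ℝ) < n * (n - 1) := by nlinarith
  have hs := Real.sq_sqrt hprod.le
  have hs₀ := (Real.sqrt_pos.mpr hprod).ne'
  refine ⟨(isMaxOn_interceptProb hpos hs hs₀).on_subset fun p hp => ?_,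
    interceptProb_one_sub_div hpos.ne' hs hs₀⟩
  calc p ≤ 1 / n := hp.2
    _ < 1 := (div_lt_one hpos).mpr (by linarith)
end

section
/- For 0 ≤ p ≤ 1, 0 ≤ r ≤ 1 with p + r ≤ 1 and 0 ≤ s ≤ 1, the quadratic in s given by (p + r - 1)·s² + (2 - r - p·r - r² - 2p)·s + (2r - p·r + r³) is nondecreasing in s on [0,1]. -/
/-! The increment of the quadratic from `a` to `b` factors as
`(1 - p - r) * (b - a) * (2 + r - a - b)`; for `a ≤ b` in `[0, 1]` the last factor is at
least `r`, so every factor is nonnegative. -/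

lemma quadratic_sub_eq_mul {R : Type*} [CommRing R] (p r a b : R) :
    ((p + r - 1) * b ^ 2 + (2 - r - p * r - r ^ 2 - 2 * p) * b + (2 * r - p * r + r ^ 3)) -
      ((p + r - 1) * a ^ 2 + (2 - r - p * r - r ^ 2 - 2 * p) * a + (2 * r - p * r + r ^ 3)) =
      (1 - p - r) * (b - a) * (2 + r - a - b) := by
  ring

theorem stmt_7_general (p r : ℝ) (hr0 : 0 ≤ r)
    (hpr : p + r ≤ 1) :
    MonotoneOn (fun s : ℝ =>
      (p + r - 1) * s ^ 2 + (2 - r - p * r - r ^ 2 - 2 * p) * s + (2 * r - p * r + r ^ 3))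
      (Set.Icc 0 1) := by
  intro a ⟨_, ha1⟩ b ⟨_, hb1⟩ hab
  rw [← sub_nonneg, quadratic_sub_eq_mul]
  have hprr : 0 ≤ 1 - p - r := by linarith
  have hsum : 0 ≤ 2 + r - a - b := by linarith
  exact mul_nonneg (mul_nonneg hprr (sub_nonneg.2 hab)) hsum

theorem stmt_7 (p r : ℝ) (hp0 : 0 ≤ p) (hp1 : p ≤ 1) (hr0 : 0 ≤ r) (hr1 : r ≤ 1)
    (hpr : p + r ≤ 1) :
    MonotoneOn (fun s : ℝ =>
      (p + r - 1) * s ^ 2 + (2 - r - p * r - r ^ 2 - 2 * p) * s + (2 * r - p * r + r ^ 3))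
      (Set.Icc 0 1) :=
  stmt_7_general p r hr0 hpr
end

section
/- For 0 ≤ p ≤ 1/3 and 0 ≤ s ≤ 1/3, setting u₂(p,s) = p·(1-3s)/(1-s) and u₃(p,s) = p·(1-3p)·(1-3s)/((1-p)·(1-s)) + 2s²/(1-s), the equation u₂(p,s) = u₃(p,s) is solved in s by ŝ(p) = (-3p² + √(4p² - 4p³ + 9p⁴))/(2(1-p)). -/
noncomputable def u₂ (p s : ℝ) : ℝ := p * (1 - 3 * s) / (1 - s)

noncomputable def u₃ (p s : ℝ) : ℝ :=
  p * (1 - 3 * p) * (1 - 3 * s) / ((1 - p) * (1 - s)) + 2 * s ^ 2 / (1 - s)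

noncomputable def sHat (p : ℝ) : ℝ :=
  (-3 * p ^ 2 + Real.sqrt (4 * p ^ 2 - 4 * p ^ 3 + 9 * p ^ 4)) / (2 * (1 - p))

/-! `ŝ(p)` is the nonnegative root of the quadratic `(1 - p) s² + 3p² s - p²`, and clearing the
denominators `(1 - p)(1 - s)` turns `u₃ - u₂` into twice that quadratic. Its discriminant exceeds
`(3p²)²` by `4p²(1 - p)` and falls short of `(3p² + 2(1 - p)/3)²` by `4(1 - p)²/9`, which places
the root in `[0, 1/3]` whenever `p < 1`. -/

theorem u₂_eq_u₃_iff {p s : ℝ} (hp : p ≠ 1) (hs : s ≠ 1) :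
    u₂ p s = u₃ p s ↔ (1 - p) * s ^ 2 + 3 * p ^ 2 * s - p ^ 2 = 0 := by
  have hp' : 1 - p ≠ 0 := sub_ne_zero.mpr hp.symm
  have hs' : 1 - s ≠ 0 := sub_ne_zero.mpr hs.symm
  have hdiff : u₃ p s - u₂ p s =
      2 * ((1 - p) * s ^ 2 + 3 * p ^ 2 * s - p ^ 2) / ((1 - p) * (1 - s)) := by
    unfold u₂ u₃
    field_simp
    ring
  rw [eq_comm, ← sub_eq_zero, hdiff]
  simp [hp', hs']

theorem sHat_eq_quadratic_root (p : ℝ) :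
    sHat p = (-(3 * p ^ 2) + √(discrim (1 - p) (3 * p ^ 2) (-p ^ 2))) / (2 * (1 - p)) := by
  unfold sHat discrim
  ring_nf

theorem sHat_isRoot {p : ℝ} (hp : p < 1) :
    (1 - p) * sHat p ^ 2 + 3 * p ^ 2 * sHat p - p ^ 2 = 0 := by
  have hdisc : 0 ≤ discrim (1 - p) (3 * p ^ 2) (-p ^ 2) := by
    unfold discrim
    nlinarith [sq_nonneg p]
  have h := (quadratic_eq_zero_iff (sub_ne_zero.mpr hp.ne') (Real.mul_self_sqrt hdisc).symm
    (sHat p)).mpr (Or.inl (sHat_eq_quadratic_root p))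
  linear_combination h

theorem sHat_mem_Icc {p : ℝ} (hp : p < 1) : sHat p ∈ Set.Icc (0 : ℝ) (1 / 3) := by
  have hden : 0 < 2 * (1 - p) := by linarith
  have hlower : 3 * p ^ 2 ≤ √(4 * p ^ 2 - 4 * p ^ 3 + 9 * p ^ 4) :=
    Real.le_sqrt_of_sq_le (by nlinarith [sq_nonneg p])
  have hupper : √(4 * p ^ 2 - 4 * p ^ 3 + 9 * p ^ 4) ≤ 3 * p ^ 2 + 2 * (1 - p) / 3 :=
    Real.sqrt_le_iff.mpr ⟨by positivity, by nlinarith [sq_nonneg (1 - p)]⟩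
  unfold sHat
  constructor
  · exact div_nonneg (by linarith) hden.le
  · rw [div_le_iff₀ hden]
    linarith

theorem stmt_10_general (p : ℝ) (hp1 : p ≤ 1 / 3) :
    sHat p ∈ Set.Icc (0 : ℝ) (1 / 3) ∧ u₂ p (sHat p) = u₃ p (sHat p) := by
  have hp : p < 1 := by linarith
  have hs := sHat_mem_Icc hp
  have hs1 : sHat p ≠ 1 := by linarith [hs.2]
  exact ⟨hs, (u₂_eq_u₃_iff hp.ne hs1).mpr (sHat_isRoot hp)⟩

theorem stmt_10 (p : ℝ) (hp0 : 0 ≤ p) (hp1 : p ≤ 1 / 3) :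
    sHat p ∈ Set.Icc (0 : ℝ) (1 / 3) ∧ u₂ p (sHat p) = u₃ p (sHat p) :=
  stmt_10_general p hp1
end

section
/- The vector (x₂, x₃, x₄) = ((2-√2)/2, √2 - 1, (2-√2)/2) satisfies x₂ + x₃ + x₄ = 1 and, for every p ∈ (0, 1/2), the fixed-point equations (1 - p + p·x₃)·x₂ = (1 - 2p)·x₂ + p·x₃ and (1 - p + p·x₃)·x₃ = p + (1 - 3p)·x₃ of the away-distribution map on the circle C₄; moreover it is the unique such probability vector with positive entries. -/
/-!
For `p ≠ 0` the two fixed-point equations reduce, after cancelling `p`, to `x₃² + 2x₃ = 1` and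
`x₂ (1 + x₃) = x₃`, which no longer involve `p`. The quadratic has `√2 - 1` as its only positive
root, and then `x₂ = (√2 - 1)/√2 = (2 - √2)/2`; the normalisation `x₂ + x₃ + x₄ = 1` gives `x₄ = x₂`.
-/

lemma away_fixed_point_iff {p x₂ x₃ : ℝ} (hp : p ≠ 0) :
    ((1 - p + p * x₃) * x₂ = (1 - 2 * p) * x₂ + p * x₃ ∧
      (1 - p + p * x₃) * x₃ = p + (1 - 3 * p) * x₃) ↔
    (x₂ * (1 + x₃) = x₃ ∧ x₃ ^ 2 + 2 * x₃ = 1) := by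
  have first : (1 - p + p * x₃) * x₂ - ((1 - 2 * p) * x₂ + p * x₃) = p * (x₂ * (1 + x₃) - x₃) := by
    ring
  have second : (1 - p + p * x₃) * x₃ - (p + (1 - 3 * p) * x₃) = p * (x₃ ^ 2 + 2 * x₃ - 1) := by
    ring
  simp only [← sub_eq_zero (a := (1 - p + p * x₃) * _), first, second, mul_eq_zero, hp,
    false_or, sub_eq_zero]

lemma sqrt_two_sub_one_sq_add_two_mul : (Real.sqrt 2 - 1) ^ 2 + 2 * (Real.sqrt 2 - 1) = 1 := by
  linear_combination Real.sq_sqrt (show (0 : ℝ) ≤ 2 by norm_num)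

lemma eq_sqrt_two_sub_one_of_sq_add_two_mul {x : ℝ} (hx : 0 < x) (h : x ^ 2 + 2 * x = 1) :
    x = Real.sqrt 2 - 1 := by
  have hsqrt : 0 < Real.sqrt 2 := by positivity
  have factored : (x - (Real.sqrt 2 - 1)) * (x + Real.sqrt 2 + 1) = 0 := by
    linear_combination h - sqrt_two_sub_one_sq_add_two_mul
  rcases mul_eq_zero.mp factored with h | h <;> linarith

lemma two_sub_sqrt_two_div_two_mul_one_add :
    (2 - Real.sqrt 2) / 2 * (1 + (Real.sqrt 2 - 1)) = Real.sqrt 2 - 1 := by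
  linear_combination (-1 / 2 : ℝ) * Real.sq_sqrt (show (0 : ℝ) ≤ 2 by norm_num)

lemma eq_two_sub_sqrt_two_div_two_of_mul_one_add {x : ℝ}
    (h : x * (1 + (Real.sqrt 2 - 1)) = Real.sqrt 2 - 1) :
    x = (2 - Real.sqrt 2) / 2 := by
  have hsqrt : 1 + (Real.sqrt 2 - 1) ≠ 0 := by simp
  exact mul_right_cancel₀ hsqrt (h.trans two_sub_sqrt_two_div_two_mul_one_add.symm)

theorem stmt_12 :
    ((2 - Real.sqrt 2) / 2 + (Real.sqrt 2 - 1) + (2 - Real.sqrt 2) / 2 = 1) ∧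
    (∀ p : ℝ, p ∈ Set.Ioo (0 : ℝ) (1 / 2) →
      (1 - p + p * (Real.sqrt 2 - 1)) * ((2 - Real.sqrt 2) / 2) =
        (1 - 2 * p) * ((2 - Real.sqrt 2) / 2) + p * (Real.sqrt 2 - 1) ∧
      (1 - p + p * (Real.sqrt 2 - 1)) * (Real.sqrt 2 - 1) =
        p + (1 - 3 * p) * (Real.sqrt 2 - 1)) ∧
    ∀ x₂ x₃ x₄ : ℝ, 0 < x₂ → 0 < x₃ → 0 < x₄ → x₂ + x₃ + x₄ = 1 →
      (∀ p : ℝ, p ∈ Set.Ioo (0 : ℝ) (1 / 2) →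
        (1 - p + p * x₃) * x₂ = (1 - 2 * p) * x₂ + p * x₃ ∧
        (1 - p + p * x₃) * x₃ = p + (1 - 3 * p) * x₃) →
      x₂ = (2 - Real.sqrt 2) / 2 ∧ x₃ = Real.sqrt 2 - 1 ∧ x₄ = (2 - Real.sqrt 2) / 2 := by
  refine ⟨by ring, fun p hp => ?_, fun x₂ x₃ x₄ _ hx₃ _ hsum hfix => ?_⟩
  · exact (away_fixed_point_iff hp.1.ne').2
      ⟨two_sub_sqrt_two_div_two_mul_one_add, sqrt_two_sub_one_sq_add_two_mul⟩
  · obtain ⟨hx₂_eq, hx₃_eq⟩ :=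
      (away_fixed_point_iff (by norm_num : (1 / 4 : ℝ) ≠ 0)).1 (hfix (1 / 4) (by norm_num))
    obtain rfl := eq_sqrt_two_sub_one_of_sq_add_two_mul hx₃ hx₃_eq
    obtain rfl := eq_two_sub_sqrt_two_div_two_of_mul_one_add hx₂_eq
    exact ⟨rfl, rfl, by linarith⟩
end

section
/- On the star S_n with attack duration m = 2, for any end-reflecting Markovian patrol with center-to-end probability p ∈ (0, 1/n), the minimal over delays d ≥ 1 of the interception probability is attained at d = 2 and equals (1 - n·p)·p/(1 - p); in particular, the sequence q_d defined by q_1 = 1 and q_{d+1} = (1 - n·p·q_d)/(1 - p·q_d) is minimized over d ≥ 1 at d = 2, where q_2 = (1 - n·p)/(1 - p). -/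
/-!
With `f q = (1 - n p q) / (1 - p q)` we have `q_{d+1} = f q_d` and `q_2 = f 1`. For `n ≥ 1` the map
`f` is decreasing on `q ≤ 1` and satisfies `f q ≤ 1` for `0 ≤ q`, so it maps `[f 1, 1]` into itself.
Hence every `q_d` lies in `[f 1, 1]`, and the minimum `f 1 = (1 - n p) / (1 - p)` is attained at `d = 2`.
-/

open Set

noncomputable def patrolStep (n p q : ℝ) : ℝ := (1 - n * p * q) / (1 - p * q)

section patrolStep

variable {n p : ℝ}

lemma patrolStep_one (n p : ℝ) : patrolStep n p 1 = (1 - n * p) / (1 - p) := by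
  simp [patrolStep]

lemma patrolStep_le_one (hn : 1 ≤ n) (hp : 0 ≤ p) {q : ℝ} (hq : 0 ≤ q) (hpq : p * q < 1) :
    patrolStep n p q ≤ 1 := by
  rw [patrolStep, div_le_one (by linarith)]
  nlinarith [mul_nonneg hp hq]

-- Cross-multiplied, the inequality reads `0 ≤ p (n - 1) (1 - q)`.
lemma patrolStep_one_le (hn : 1 ≤ n) (hp : 0 ≤ p) (hp1 : p < 1) {q : ℝ} (hq : q ≤ 1)
    (hpq : p * q < 1) : patrolStep n p 1 ≤ patrolStep n p q := by
  rw [patrolStep_one, patrolStep, div_le_div_iff₀ (by linarith) (by linarith)]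
  nlinarith [mul_nonneg (mul_nonneg hp (sub_nonneg.mpr hn)) (sub_nonneg.mpr hq)]

lemma patrolStep_one_pos (hnp : n * p < 1) (hp1 : p < 1) :
    0 < patrolStep n p 1 := by
  rw [patrolStep_one]
  exact div_pos (by linarith) (by linarith)

lemma mapsTo_patrolStep (hn : 1 ≤ n) (hp : 0 ≤ p) (hnp : n * p < 1) :
    MapsTo (patrolStep n p) (Icc (patrolStep n p 1) 1) (Icc (patrolStep n p 1) 1) := by
  have hp1 : p < 1 := by nlinarith
  rintro q ⟨hq_low, hq_up⟩
  have hq0 : 0 ≤ q := (patrolStep_one_pos hnp hp1).le.trans hq_low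
  have hpq : p * q < 1 := by nlinarith
  exact ⟨patrolStep_one_le hn hp hp1 hq_up hpq, patrolStep_le_one hn hp hq0 hpq⟩

lemma patrolStep_orbit_mem_Icc (hn : 1 ≤ n) (hp : 0 ≤ p) (hnp : n * p < 1) {q : ℕ → ℝ}
    (hq1 : q 1 = 1) (hrec : ∀ d, 1 ≤ d → q (d + 1) = patrolStep n p (q d)) :
    ∀ d, 1 ≤ d → q d ∈ Icc (patrolStep n p 1) 1 := by
  intro d hd
  induction d, hd using Nat.le_induction with
  | base =>
    have hp1 : p < 1 := by nlinarith
    rw [hq1]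
    exact ⟨patrolStep_le_one hn hp zero_le_one (by linarith), le_rfl⟩
  | succ d hd ih =>
    rw [hrec d hd]
    exact mapsTo_patrolStep hn hp hnp ih

end patrolStep

theorem stmt_17_general (n : ℕ) (p : ℝ) (hp : 0 < p) (hpn : p < 1 / n)
    (q : ℕ → ℝ) (hq1 : q 1 = 1)
    (hrec : ∀ d : ℕ, 1 ≤ d → q (d + 1) = (1 - n * p * q d) / (1 - p * q d)) :
    q 2 = (1 - n * p) / (1 - p) ∧
    (∀ d : ℕ, 1 ≤ d → q 2 ≤ q d) ∧
    (∀ d : ℕ, 1 ≤ d → p * q 2 ≤ p * q d) ∧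
    p * q 2 = (1 - n * p) * p / (1 - p) := by
  have hn0 : (0 : ℝ) < n := one_div_pos.mp (hp.trans hpn)
  have hn : (1 : ℝ) ≤ n := Nat.one_le_cast.mpr (Nat.cast_pos.mp hn0)
  have hnp : (n : ℝ) * p < 1 := by rwa [lt_div_iff₀ hn0, mul_comm] at hpn
  have hq2 : q 2 = patrolStep n p 1 := by rw [hrec 1 le_rfl, hq1]; rfl
  have hmin : ∀ d, 1 ≤ d → q 2 ≤ q d := fun d hd =>
    hq2 ▸ (patrolStep_orbit_mem_Icc hn hp.le hnp hq1 hrec d hd).1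
  refine ⟨hq2.trans (patrolStep_one _ _), hmin,
    fun d hd => mul_le_mul_of_nonneg_left (hmin d hd) hp.le, ?_⟩
  rw [hq2, patrolStep_one]
  ring

theorem stmt_17 (n : ℕ) (hn : 2 ≤ n) (p : ℝ) (hp : 0 < p) (hpn : p < 1 / n)
    (q : ℕ → ℝ) (hq1 : q 1 = 1)
    (hrec : ∀ d : ℕ, 1 ≤ d → q (d + 1) = (1 - n * p * q d) / (1 - p * q d)) :
    q 2 = (1 - n * p) / (1 - p) ∧
    (∀ d : ℕ, 1 ≤ d → q 2 ≤ q d) ∧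
    (∀ d : ℕ, 1 ≤ d → p * q 2 ≤ p * q d) ∧
    p * q 2 = (1 - n * p) * p / (1 - p) :=
  stmt_17_general n p hp hpn q hq1 hrec
end
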